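/- Let a_0 > a_1 > ... > a_N > 0 and let C_j be real coefficients, not all zero. If the sequence C_0, C_1, ..., C_N (ignoring zero entries) has at most two sign changes, then f(x) = ∑_{j=0}^N C_j·a_j^x has at most two real zeros. -/

import Mathlib

/-!
Write `a j ^ x = exp (μ j * x)` with `μ j = log (a j)` decreasing, and place a threshold `t`
between the exponents of each sign change; then all the products `C j * ∏ (μ j - t)` share a sign.
For a single threshold `t`, the zeros of `f` are those of `exp (-t x) * f x`, whose derivative is
`exp (-t x) * ∑ C j * (μ j - t) * exp (μ j * x)`. By Rolle this new exponential sum loses at most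
one zero, and its products over the remaining thresholds are the old ones. With no threshold left,
all coefficients share a sign and the sum has no zero at all.
-/

open Finset Real

noncomputable def expSum {ι : Type*} (s : Finset ι) (c μ : ι → ℝ) (x : ℝ) : ℝ :=
  ∑ j ∈ s, c j * exp (μ j * x)

theorem exists_finset_deriv_eq_zero_card_le_succ {f f' : ℝ → ℝ}
    (hf : ∀ x, HasDerivAt f (f' x) x) (Z : Finset ℝ) (hZ : ∀ x ∈ Z, f x = 0) :
    ∃ Z' : Finset ℝ, (∀ x ∈ Z', f' x = 0) ∧ Z.card ≤ Z'.card + 1 := by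
  classical
  have rolle : ∀ p ∈ Z ×ˢ Z, p.1 < p.2 → ∃ c ∈ Set.Ioo p.1 p.2, f' c = 0 := by
    intro p hp hlt
    rw [mem_product] at hp
    exact exists_hasDerivAt_eq_zero hlt (fun x _ => (hf x).continuousAt.continuousWithinAt)
      ((hZ _ hp.1).trans (hZ _ hp.2).symm) (fun x _ => hf x)
  choose! c hc using rolle
  refine ⟨((Z ×ˢ Z).filter fun p => p.1 < p.2).image c, ?_, card_le_of_interleaved ?_⟩
  · simp only [mem_image, mem_filter, forall_exists_index, and_imp]
    rintro _ p hp hlt rfl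
    exact (hc p hp hlt).2
  · intro x hx y hy hxy _
    have hp : (x, y) ∈ Z ×ˢ Z := mem_product.mpr ⟨hx, hy⟩
    exact ⟨c (x, y), mem_image_of_mem _ (mem_filter.mpr ⟨hp, hxy⟩), (hc _ hp hxy).1⟩

section ExpSum

variable {ι : Type*} (s : Finset ι) (c μ : ι → ℝ)

theorem hasDerivAt_expSum (x : ℝ) :
    HasDerivAt (expSum s c μ) (expSum s (fun j => c j * μ j) μ x) x := by
  unfold expSum
  refine HasDerivAt.fun_sum fun j _ => ?_
  refine ((((hasDerivAt_id x).const_mul (μ j)).exp).const_mul (c j)).congr_deriv ?_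
  simp only [id, mul_one]
  ring

theorem expSum_sub_const (t x : ℝ) :
    expSum s c (fun j => μ j - t) x = expSum s c μ x / exp (t * x) := by
  simp only [expSum, sum_div, mul_div_assoc, ← exp_sub, sub_mul]

theorem expSum_ne_zero {m : ι} (hm : m ∈ s) (hcm : c m ≠ 0)
    (hsign : ∀ i ∈ s, ∀ j ∈ s, 0 ≤ c i * c j) (x : ℝ) : expSum s c μ x ≠ 0 := by
  have hpos : 0 < c m * expSum s c μ x := by
    rw [expSum, mul_sum]
    refine sum_pos' (fun j hj => ?_) ⟨m, hm, ?_⟩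
    · rw [← mul_assoc]; exact mul_nonneg (hsign m hm j hj) (exp_pos _).le
    · rw [← mul_assoc]; exact mul_pos (mul_self_pos.mpr hcm) (exp_pos _)
  exact right_ne_zero_of_mul hpos.ne'

theorem card_zeros_le_of_mul_prod_nonneg {κ : Type*} [DecidableEq κ] (T : Finset κ) (t : κ → ℝ)
    (hsign : ∀ i ∈ s, ∀ j ∈ s,
      0 ≤ (c i * ∏ k ∈ T, (μ i - t k)) * (c j * ∏ k ∈ T, (μ j - t k)))
    (hne : ∃ j ∈ s, c j * ∏ k ∈ T, (μ j - t k) ≠ 0)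
    (Z : Finset ℝ) (hZ : ∀ x ∈ Z, expSum s c μ x = 0) : Z.card ≤ T.card := by
  induction T using Finset.induction_on generalizing c Z with
  | empty =>
    simp only [prod_empty, mul_one] at hsign hne
    obtain ⟨m, hm, hcm⟩ := hne
    rw [card_empty, Nat.le_zero, card_eq_zero, eq_empty_iff_forall_notMem]
    exact fun x hx => expSum_ne_zero s c μ hm hcm hsign x (hZ x hx)
  | insert k T hk ih =>
    set c' := fun j => c j * (μ j - t k)
    obtain ⟨Z', hderiv, hcard⟩ := exists_finset_deriv_eq_zero_card_le_succ
      (hasDerivAt_expSum s c fun j => μ j - t k) Z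
      (fun x hx => by rw [expSum_sub_const, hZ x hx, zero_div])
    have hZ' : ∀ x ∈ Z', expSum s c' μ x = 0 := fun x hx => by
      have := hderiv x hx
      rwa [expSum_sub_const, div_eq_zero_iff, or_iff_left (exp_pos _).ne'] at this
    have hc' : ∀ j, c j * ∏ k ∈ insert k T, (μ j - t k) = c' j * ∏ k ∈ T, (μ j - t k) :=
      fun j => by rw [prod_insert hk]; ring
    simp only [hc'] at hsign hne
    rw [card_insert_of_notMem hk]
    exact hcard.trans (Nat.add_le_add_right (ih c' hsign hne Z' hZ') 1)

end ExpSum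

theorem mul_pos_of_mul_pos_consecutive {P : ℕ → Prop} {D : ℕ → ℝ}
    (hcons : ∀ i j, i < j → P i → P j → (∀ k ∈ Ioo i j, ¬ P k) → 0 < D i * D j)
    (i j : ℕ) (hij : i < j) (hi : P i) (hj : P j) : 0 < D i * D j := by
  induction hn : j - i using Nat.strong_induction_on generalizing i j with
  | _ n ih =>
    by_cases hk : ∃ k ∈ Ioo i j, P k
    · obtain ⟨k, hk, hPk⟩ := hk
      rw [mem_Ioo] at hk
      have hik := ih (k - i) (by omega) i k hk.1 hi hPk rfl
      have hkj := ih (j - k) (by omega) k j hk.2 hPk hj rfl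
      have : 0 < D i * D j * (D k * D k) := (mul_pos hik hkj).trans_eq (by ring)
      exact pos_of_mul_pos_left this (mul_self_nonneg _)
    · exact hcons i j hij hi hj fun k hk' hPk => hk ⟨k, hk', hPk⟩

noncomputable def signChanges (N : ℕ) (C : ℕ → ℝ) : Finset (ℕ × ℕ) :=
  (Finset.range (N + 1) ×ˢ Finset.range (N + 1)).filter
    (fun p => p.1 < p.2 ∧ C p.1 * C p.2 < 0 ∧ ∀ j ∈ Finset.Ioo p.1 p.2, C j = 0)

section SignChanges

variable {N : ℕ} {C : ℕ → ℝ}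

theorem mem_signChanges {p q : ℕ} :
    (p, q) ∈ signChanges N C ↔ p < q ∧ q ≤ N ∧ C p * C q < 0 ∧ ∀ j ∈ Ioo p q, C j = 0 := by
  simp only [signChanges, mem_filter, mem_product, mem_range]
  constructor
  · rintro ⟨⟨-, hq⟩, hpq, h⟩
    exact ⟨hpq, by omega, h⟩
  · rintro ⟨hpq, hq, h⟩
    exact ⟨⟨by omega, by omega⟩, hpq, h⟩

theorem le_or_le_of_mem_signChanges {p q m : ℕ} (hs : (p, q) ∈ signChanges N C) (hm : C m ≠ 0) :
    m ≤ p ∨ q ≤ m := by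
  by_contra! h
  exact hm ((mem_signChanges.mp hs).2.2.2 m (mem_Ioo.mpr h))

theorem eq_or_le_or_le_of_mem_signChanges {p q i j : ℕ} (hs : (p, q) ∈ signChanges N C)
    (hi : C i ≠ 0) (hj : C j ≠ 0) (hzero : ∀ k ∈ Ioo i j, C k = 0) :
    (p, q) = (i, j) ∨ q ≤ i ∨ j ≤ p := by
  obtain ⟨hpq, -, hCpq, -⟩ := mem_signChanges.mp hs
  have hCp : C p ≠ 0 := left_ne_zero_of_mul hCpq.ne
  have hCq : C q ≠ 0 := right_ne_zero_of_mul hCpq.ne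
  have hp : ¬ (i < p ∧ p < j) := fun h => hCp (hzero p (mem_Ioo.mpr h))
  have hq : ¬ (i < q ∧ q < j) := fun h => hCq (hzero q (mem_Ioo.mpr h))
  have := le_or_le_of_mem_signChanges hs hi
  have := le_or_le_of_mem_signChanges hs hj
  rw [Prod.mk.injEq]
  omega

variable {μ : ℕ → ℝ} (hμ : StrictAntiOn μ (Set.Iic N))
include hμ

theorem midpoint_lt_of_le_fst {p q m : ℕ} (hs : (p, q) ∈ signChanges N C) (hm : m ≤ p) :
    (μ p + μ q) / 2 < μ m := by
  obtain ⟨hpq, hq, -⟩ := mem_signChanges.mp hs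
  have hqp : μ q < μ p := hμ (Set.mem_Iic.mpr (by omega)) (Set.mem_Iic.mpr hq) hpq
  have hpm : μ p ≤ μ m := hμ.antitoneOn (Set.mem_Iic.mpr (by omega))
    (Set.mem_Iic.mpr (by omega)) hm
  linarith

theorem lt_midpoint_of_snd_le {p q m : ℕ} (hs : (p, q) ∈ signChanges N C) (hm : q ≤ m)
    (hmN : m ≤ N) : μ m < (μ p + μ q) / 2 := by
  obtain ⟨hpq, hq, -⟩ := mem_signChanges.mp hs
  have hqp : μ q < μ p := hμ (Set.mem_Iic.mpr (by omega)) (Set.mem_Iic.mpr hq) hpq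
  have hmq : μ m ≤ μ q := hμ.antitoneOn (Set.mem_Iic.mpr hq) (Set.mem_Iic.mpr hmN) hm
  linarith

theorem prod_sub_midpoint_ne_zero {m : ℕ} (hmN : m ≤ N) (hm : C m ≠ 0) :
    ∏ s ∈ signChanges N C, (μ m - (μ s.1 + μ s.2) / 2) ≠ 0 := by
  refine prod_ne_zero_iff.mpr fun ⟨p, q⟩ hs => ?_
  rcases le_or_le_of_mem_signChanges hs hm with h | h
  · exact (sub_pos.mpr (midpoint_lt_of_le_fst hμ hs h)).ne'
  · exact (sub_neg.mpr (lt_midpoint_of_snd_le hμ hs h hmN)).ne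

/-- Between consecutive nonzero entries `C i`, `C j`, only the midpoint of `(i, j)`, present
exactly when `C i * C j < 0`, separates `μ i` from `μ j`. -/
theorem mul_prod_sub_midpoint_mul_pos_of_consecutive {i j : ℕ} (hij : i < j) (hjN : j ≤ N)
    (hi : C i ≠ 0) (hj : C j ≠ 0) (hzero : ∀ k ∈ Ioo i j, C k = 0) :
    0 < (C i * ∏ s ∈ signChanges N C, (μ i - (μ s.1 + μ s.2) / 2)) *
      (C j * ∏ s ∈ signChanges N C, (μ j - (μ s.1 + μ s.2) / 2)) := by
  have hfactor : ∀ s ∈ signChanges N C, s ≠ (i, j) →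
      0 < (μ i - (μ s.1 + μ s.2) / 2) * (μ j - (μ s.1 + μ s.2) / 2) := by
    rintro ⟨p, q⟩ hs hne
    rcases eq_or_le_or_le_of_mem_signChanges hs hi hj hzero with h | h | h
    · exact absurd h hne
    · exact mul_pos_of_neg_of_neg (sub_neg.mpr (lt_midpoint_of_snd_le hμ hs h (by omega)))
        (sub_neg.mpr (lt_midpoint_of_snd_le hμ hs (by omega) hjN))
    · exact mul_pos (sub_pos.mpr (midpoint_lt_of_le_fst hμ hs (by omega)))
        (sub_pos.mpr (midpoint_lt_of_le_fst hμ hs h))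
  rw [mul_mul_mul_comm, ← prod_mul_distrib]
  by_cases hs : (i, j) ∈ signChanges N C
  · have hneg : (μ i - (μ i + μ j) / 2) * (μ j - (μ i + μ j) / 2) < 0 :=
      mul_neg_of_pos_of_neg (sub_pos.mpr (midpoint_lt_of_le_fst hμ hs le_rfl))
        (sub_neg.mpr (lt_midpoint_of_snd_le hμ hs le_rfl hjN))
    rw [← mul_prod_erase _ _ hs, ← mul_assoc]
    exact mul_pos (mul_pos_of_neg_of_neg (mem_signChanges.mp hs).2.2.1 hneg)
      (prod_pos fun s hs' => hfactor s (mem_of_mem_erase hs') (ne_of_mem_erase hs'))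
  · have hC : 0 < C i * C j := (mul_ne_zero hi hj).lt_or_gt.resolve_left
      fun hneg => hs (mem_signChanges.mpr ⟨hij, hjN, hneg, hzero⟩)
    exact mul_pos hC (prod_pos fun s hs' => hfactor s hs' (ne_of_mem_of_not_mem hs' hs))

theorem mul_prod_sub_midpoint_mul_nonneg {i j : ℕ} (hiN : i ≤ N) (hjN : j ≤ N) :
    0 ≤ (C i * ∏ s ∈ signChanges N C, (μ i - (μ s.1 + μ s.2) / 2)) *
      (C j * ∏ s ∈ signChanges N C, (μ j - (μ s.1 + μ s.2) / 2)) := by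
  rcases eq_or_ne (C i) 0 with hi | hi
  · simp [hi]
  rcases eq_or_ne (C j) 0 with hj | hj
  · simp [hj]
  have hpos := mul_pos_of_mul_pos_consecutive (P := fun k => k ≤ N ∧ C k ≠ 0)
    (D := fun k => C k * ∏ s ∈ signChanges N C, (μ k - (μ s.1 + μ s.2) / 2))
    fun p q hpq hp hq hnext =>
      mul_prod_sub_midpoint_mul_pos_of_consecutive hμ hpq hq.1 hp.2 hq.2 fun k hk => by
        by_contra hk0
        exact hnext k hk ⟨(mem_Ioo.mp hk).2.le.trans hq.1, hk0⟩
  rcases lt_trichotomy i j with h | rfl | h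
  · exact (hpos i j h ⟨hiN, hi⟩ ⟨hjN, hj⟩).le
  · exact mul_self_nonneg _
  · exact (hpos j i h ⟨hjN, hj⟩ ⟨hiN, hi⟩).le.trans_eq (mul_comm _ _)

theorem card_zeros_le_card_signChanges (hC : ∃ j ≤ N, C j ≠ 0) (Z : Finset ℝ)
    (hZ : ∀ x ∈ Z, expSum (range (N + 1)) C μ x = 0) : Z.card ≤ (signChanges N C).card := by
  obtain ⟨m, hmN, hm⟩ := hC
  refine card_zeros_le_of_mul_prod_nonneg _ C μ (signChanges N C) (fun s => (μ s.1 + μ s.2) / 2)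
    (fun i hi j hj => ?_) ⟨m, mem_range.mpr (by omega), ?_⟩ Z hZ
  · exact mul_prod_sub_midpoint_mul_nonneg hμ (Nat.lt_succ_iff.mp (mem_range.mp hi))
      (Nat.lt_succ_iff.mp (mem_range.mp hj))
  · exact mul_ne_zero hm (prod_sub_midpoint_ne_zero hμ hmN hm)

end SignChanges

theorem two_sign_changes_two_zeros (N : ℕ) (a C : ℕ → ℝ)
    (ha_pos : ∀ j ≤ N, 0 < a j)
    (ha_anti : ∀ i j, i < j → j ≤ N → a j < a i)
    (hC_ne : ∃ j ≤ N, C j ≠ 0)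
    (hsign : ((Finset.range (N + 1) ×ˢ Finset.range (N + 1)).filter
        (fun p => p.1 < p.2 ∧ C p.1 * C p.2 < 0 ∧
          ∀ j ∈ Finset.Ioo p.1 p.2, C j = 0)).card ≤ 2) :
    ∀ x y z : ℝ,
      (∑ j ∈ Finset.range (N + 1), C j * a j ^ x = 0) →
      (∑ j ∈ Finset.range (N + 1), C j * a j ^ y = 0) →
      (∑ j ∈ Finset.range (N + 1), C j * a j ^ z = 0) →
      x = y ∨ x = z ∨ y = z := by
  intro x y z hx hy hz
  by_contra! hdistinct
  have hsum : ∀ w, ∑ j ∈ range (N + 1), C j * a j ^ w = expSum (range (N + 1)) C (log ∘ a) w :=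
    fun w => sum_congr rfl fun j hj => by
      rw [rpow_def_of_pos (ha_pos j (Nat.lt_succ_iff.mp (mem_range.mp hj))), Function.comp_apply]
  have hlog : StrictAntiOn (log ∘ a) (Set.Iic N) := fun i _ j hj hij =>
    log_lt_log (ha_pos j hj) (ha_anti i j hij hj)
  have hcard := card_zeros_le_card_signChanges hlog hC_ne {x, y, z} (by
    simp only [mem_insert, mem_singleton, forall_eq_or_imp, forall_eq, ← hsum]
    exact ⟨hx, hy, hz⟩)
  rw [card_eq_three.mpr ⟨x, y, z, hdistinct.1, hdistinct.2.1, hdistinct.2.2, rfl⟩] at hcard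
  exact absurd (hcard.trans hsign) (by norm_num)
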